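/- arXiv:1710.02848 — 3 statements merged into one kernel-verified Lean document; each statement's English description precedes it below -/
import Mathlib

section
/- Let q ∈ ℂ with |q| ∉ {0,1}. If b ∈ ℂ(s) has a pole of order m ≥ 1 at a point β ∈ ℂ* and has no pole of order ≥ m at any point q^ℓ β with ℓ ∈ ℤ \ {0}, then there is no f ∈ ℂ(s) such that b(s) = f(qs) − f(s). -/
/-- The substitution `s ↦ q s` on rational functions over `ℂ`. -/
noncomputable def qDil (q : ℂ) (f : RatFunc ℂ) : RatFunc ℂ :=
  RatFunc.eval (RatFunc.C : ℂ →+* RatFunc ℂ) (RatFunc.C q * RatFunc.X) f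

open Polynomial

/-- The order of vanishing of a rational function at a point (negative at a pole). -/
noncomputable def ordAt (α : ℂ) (f : RatFunc ℂ) : ℤ :=
  (f.num.rootMultiplicity α : ℤ) - f.denom.rootMultiplicity α

lemma rootMultiplicity_neg' (p : ℂ[X]) (α : ℂ) :
    (-p).rootMultiplicity α = p.rootMultiplicity α := by
  rcases eq_or_ne p 0 with rfl | h
  · simp
  · apply le_antisymm
    · rw [Polynomial.le_rootMultiplicity_iff h]
      exact (dvd_neg).1 (by simpa using Polynomial.pow_rootMultiplicity_dvd (-p) α)
    · rw [Polynomial.le_rootMultiplicity_iff (neg_ne_zero.2 h)]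
      exact (dvd_neg).2 (Polynomial.pow_rootMultiplicity_dvd p α)

lemma ordAt_div (α : ℂ) {p r : ℂ[X]} (hp : p ≠ 0) (hr : r ≠ 0) :
    ordAt α (algebraMap ℂ[X] (RatFunc ℂ) p / algebraMap ℂ[X] (RatFunc ℂ) r)
      = (p.rootMultiplicity α : ℤ) - r.rootMultiplicity α := by
  set F := algebraMap ℂ[X] (RatFunc ℂ) p / algebraMap ℂ[X] (RatFunc ℂ) r with hF
  have hpr : algebraMap ℂ[X] (RatFunc ℂ) p ≠ 0 := RatFunc.algebraMap_ne_zero hp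
  have hrr : algebraMap ℂ[X] (RatFunc ℂ) r ≠ 0 := RatFunc.algebraMap_ne_zero hr
  have hFne : F ≠ 0 := div_ne_zero hpr hrr
  have hnum : F.num ≠ 0 := RatFunc.num_ne_zero hFne
  have hden : F.denom ≠ 0 := F.denom_ne_zero
  have hcross : p * F.denom = F.num * r := by
    apply RatFunc.algebraMap_injective ℂ
    rw [map_mul, map_mul]
    have h1 : algebraMap ℂ[X] (RatFunc ℂ) F.num / algebraMap ℂ[X] (RatFunc ℂ) F.denom
        = algebraMap ℂ[X] (RatFunc ℂ) p / algebraMap ℂ[X] (RatFunc ℂ) r :=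
      (RatFunc.num_div_denom F).trans hF
    rw [div_eq_div_iff (RatFunc.algebraMap_ne_zero hden) hrr] at h1
    exact h1.symm
  have hmul : (p * F.denom).rootMultiplicity α
      = (F.num * r).rootMultiplicity α := by rw [hcross]
  rw [Polynomial.rootMultiplicity_mul (mul_ne_zero hp hden),
    Polynomial.rootMultiplicity_mul (mul_ne_zero hnum hr)] at hmul
  unfold ordAt
  omega

lemma min_le_ordAt_add (α : ℂ) {f g : RatFunc ℂ} (hf : f ≠ 0) (hg : g ≠ 0)
    (hfg : f + g ≠ 0) : min (ordAt α f) (ordAt α g) ≤ ordAt α (f + g) := by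
  have hfn : f.num ≠ 0 := RatFunc.num_ne_zero hf
  have hgn : g.num ≠ 0 := RatFunc.num_ne_zero hg
  have hfd : f.denom ≠ 0 := f.denom_ne_zero
  have hgd : g.denom ≠ 0 := g.denom_ne_zero
  have hfd' : algebraMap ℂ[X] (RatFunc ℂ) f.denom ≠ 0 := RatFunc.algebraMap_ne_zero hfd
  have hgd' : algebraMap ℂ[X] (RatFunc ℂ) g.denom ≠ 0 := RatFunc.algebraMap_ne_zero hgd
  have key : f + g = algebraMap ℂ[X] (RatFunc ℂ) (f.num * g.denom + f.denom * g.num)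
      / algebraMap ℂ[X] (RatFunc ℂ) (f.denom * g.denom) := by
    conv_lhs => rw [← RatFunc.num_div_denom f, ← RatFunc.num_div_denom g]
    rw [div_add_div _ _ hfd' hgd', map_add, map_mul, map_mul, map_mul]
  have hN : f.num * g.denom + f.denom * g.num ≠ 0 := by
    intro h0
    rw [key, h0, map_zero, zero_div] at hfg
    exact hfg rfl
  rw [key, ordAt_div α hN (mul_ne_zero hfd hgd)]
  have hadd := Polynomial.rootMultiplicity_add (p := f.num * g.denom)
    (q := f.denom * g.num) α hN
  rw [Polynomial.rootMultiplicity_mul (mul_ne_zero hfn hgd),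
    Polynomial.rootMultiplicity_mul (mul_ne_zero hfd hgn)] at hadd
  rw [Polynomial.rootMultiplicity_mul (mul_ne_zero hfd hgd)]
  unfold ordAt
  rcases min_le_iff.mp hadd with h | h
  · exact min_le_of_left_le (by omega)
  · exact min_le_of_right_le (by omega)

lemma ordAt_neg (α : ℂ) (f : RatFunc ℂ) : ordAt α (-f) = ordAt α f := by
  rcases eq_or_ne f 0 with rfl | hf
  · simp
  · have h1 : -f = algebraMap ℂ[X] (RatFunc ℂ) (-f.num)
        / algebraMap ℂ[X] (RatFunc ℂ) f.denom := by
      rw [map_neg, eq_div_iff (RatFunc.algebraMap_ne_zero f.denom_ne_zero)]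
      have h2 : algebraMap ℂ[X] (RatFunc ℂ) f.num / algebraMap ℂ[X] (RatFunc ℂ) f.denom = f :=
        RatFunc.num_div_denom f
      rw [div_eq_iff (RatFunc.algebraMap_ne_zero f.denom_ne_zero)] at h2
      linear_combination h2
    rw [h1, ordAt_div α (neg_ne_zero.2 (RatFunc.num_ne_zero hf)) f.denom_ne_zero,
      rootMultiplicity_neg']
    rfl

lemma ordAt_add_of_lt (α : ℂ) {f g : RatFunc ℂ} (hf : f ≠ 0) (hg : g ≠ 0)
    (h : ordAt α f < ordAt α g) : ordAt α (f + g) = ordAt α f := by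
  have hfg : f + g ≠ 0 := by
    intro h0
    have : g = -f := by linear_combination h0
    rw [this, ordAt_neg] at h
    exact lt_irrefl _ h
  have le1 : ordAt α f ≤ ordAt α (f + g) := by
    have h' := min_le_ordAt_add α hf hg hfg
    rwa [min_eq_left h.le] at h'
  have hfeq : (f + g) + (-g) = f := by ring
  have le2 := min_le_ordAt_add α hfg (neg_ne_zero.2 hg) (by rw [hfeq]; exact hf)
  rw [hfeq, ordAt_neg] at le2
  rcases min_le_iff.mp le2 with h' | h' <;> omega

lemma scale_scale {q : ℂ} (hq : q ≠ 0) (p : ℂ[X]) :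
    aeval (C q⁻¹ * X) (aeval (C q * X) p) = p := by
  have hcomp : ((aeval (C q⁻¹ * X) : ℂ[X] →ₐ[ℂ] ℂ[X]).comp
      (aeval (C q * X) : ℂ[X] →ₐ[ℂ] ℂ[X])) = AlgHom.id ℂ ℂ[X] := by
    apply Polynomial.algHom_ext
    simp only [AlgHom.coe_comp, Function.comp_apply, aeval_X, AlgHom.coe_id, id_eq, map_mul,
      aeval_C, Polynomial.algebraMap_eq]
    rw [← mul_assoc, ← C_mul]
    rw [mul_inv_cancel₀ hq, C_1, one_mul]
  have := congrFun (congrArg (fun (h : ℂ[X] →ₐ[ℂ] ℂ[X]) => (h : ℂ[X] → ℂ[X])) hcomp) p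
  simpa using this

lemma dvd_scale {q α : ℂ} (n : ℕ) {p : ℂ[X]} (h : (X - C (q * α)) ^ n ∣ p) :
    (X - C α) ^ n ∣ aeval (C q * X) p := by
  obtain ⟨r, rfl⟩ := h
  rw [map_mul, map_pow]
  have heq : aeval (C q * X) (X - C (q * α)) = C q * (X - C α) := by
    rw [map_sub, aeval_X, aeval_C, mul_sub, ← C_mul, Polynomial.algebraMap_eq]
  rw [heq, mul_pow]
  exact dvd_mul_of_dvd_left (dvd_mul_left _ _) _

lemma rootMult_scale {q : ℂ} (hq : q ≠ 0) (α : ℂ) {p : ℂ[X]} (hp : p ≠ 0) :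
    (aeval (C q * X) p).rootMultiplicity α = p.rootMultiplicity (q * α) := by
  have hσp : aeval (C q * X) p ≠ 0 := by
    intro h0
    have := scale_scale hq p
    rw [h0, map_zero] at this
    exact hp this.symm
  apply le_antisymm
  · rw [Polynomial.le_rootMultiplicity_iff hp]
    have h1 : (X - C (q⁻¹ * (q * α))) ^ ((aeval (C q * X) p).rootMultiplicity α)
        ∣ aeval (C q * X) p := by
      rw [inv_mul_cancel_left₀ hq]
      exact Polynomial.pow_rootMultiplicity_dvd _ α
    have h2 := dvd_scale (q := q⁻¹) (α := q * α) _ h1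
    rwa [scale_scale hq p] at h2
  · rw [Polynomial.le_rootMultiplicity_iff hσp]
    exact dvd_scale _ (Polynomial.pow_rootMultiplicity_dvd p (q * α))

lemma eval₂_eq_algebraMap_aeval (q : ℂ) (p : ℂ[X]) :
    Polynomial.eval₂ (RatFunc.C : ℂ →+* RatFunc ℂ) (RatFunc.C q * RatFunc.X) p
      = algebraMap ℂ[X] (RatFunc ℂ) (aeval (C q * X) p) := by
  have haev : aeval (C q * X) p = Polynomial.eval₂ (Polynomial.C : ℂ →+* ℂ[X]) (C q * X) p := by
    rw [aeval_def]; rfl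
  have hC : (algebraMap ℂ[X] (RatFunc ℂ)).comp (Polynomial.C : ℂ →+* ℂ[X])
      = (RatFunc.C : ℂ →+* RatFunc ℂ) := by
    apply RingHom.ext
    intro a
    simp [RatFunc.algebraMap_C]
  have hX : algebraMap ℂ[X] (RatFunc ℂ) (C q * X) = RatFunc.C q * RatFunc.X := by
    rw [map_mul, RatFunc.algebraMap_C, RatFunc.algebraMap_X]
  rw [haev, Polynomial.hom_eval₂, hC, hX]

lemma qDil_eq (q : ℂ) (f : RatFunc ℂ) :
    qDil q f = algebraMap ℂ[X] (RatFunc ℂ) (aeval (C q * X) f.num)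
      / algebraMap ℂ[X] (RatFunc ℂ) (aeval (C q * X) f.denom) := by
  unfold qDil RatFunc.eval
  rw [eval₂_eq_algebraMap_aeval, eval₂_eq_algebraMap_aeval]

lemma qDil_ne_zero {q : ℂ} (hq : q ≠ 0) {f : RatFunc ℂ} (hf : f ≠ 0) :
    qDil q f ≠ 0 := by
  rw [qDil_eq]
  apply div_ne_zero <;> apply RatFunc.algebraMap_ne_zero
  · intro h0
    have := scale_scale hq f.num
    rw [h0, map_zero] at this
    exact RatFunc.num_ne_zero hf this.symm
  · intro h0
    have := scale_scale hq f.denom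
    rw [h0, map_zero] at this
    exact f.denom_ne_zero this.symm

lemma ordAt_qDil {q : ℂ} (hq : q ≠ 0) (α : ℂ) {f : RatFunc ℂ} (hf : f ≠ 0) :
    ordAt α (qDil q f) = ordAt (q * α) f := by
  have hn : f.num ≠ 0 := RatFunc.num_ne_zero hf
  have hd : f.denom ≠ 0 := f.denom_ne_zero
  have hσn : aeval (C q * X) f.num ≠ 0 := by
    intro h0; have := scale_scale hq f.num; rw [h0, map_zero] at this; exact hn this.symm
  have hσd : aeval (C q * X) f.denom ≠ 0 := by
    intro h0; have := scale_scale hq f.denom; rw [h0, map_zero] at this; exact hd this.symm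
  rw [qDil_eq, ordAt_div α hσn hσd, rootMult_scale hq α hn, rootMult_scale hq α hd]
  rfl

lemma num_rootMult_eq_zero {b : RatFunc ℂ} {α : ℂ}
    (h : 0 < b.denom.rootMultiplicity α) : b.num.rootMultiplicity α = 0 := by
  by_contra hne
  have hbn : b.num ≠ 0 := by
    intro h0
    have hb0 : b = 0 := RatFunc.num_eq_zero_iff.mp h0
    rw [hb0, RatFunc.denom_zero] at h
    simp [Polynomial.rootMultiplicity_eq_zero (by simp [Polynomial.IsRoot] : ¬(1 : ℂ[X]).IsRoot α)] at h
  have h1 : (X - C α) ∣ b.num :=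
    Polynomial.dvd_iff_isRoot.2 ((Polynomial.rootMultiplicity_pos hbn).1 (Nat.pos_of_ne_zero hne))
  have h2 : (X - C α) ∣ b.denom :=
    Polynomial.dvd_iff_isRoot.2 ((Polynomial.rootMultiplicity_pos b.denom_ne_zero).1 h)
  exact Polynomial.not_isUnit_X_sub_C α ((RatFunc.isCoprime_num_denom b).isUnit_of_dvd' h1 h2)

lemma zpow_mul_injective {q β : ℂ} (hq0 : q ≠ 0) (hq1 : ‖q‖ ≠ 1) (hβ : β ≠ 0) :
    Function.Injective (fun ℓ : ℤ => q ^ ℓ * β) := by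
  intro a c h
  simp only [mul_eq_mul_right_iff, or_iff_left hβ] at h
  have habs : ‖q‖ ^ a = ‖q‖ ^ c := by
    rw [← norm_zpow, ← norm_zpow, h]
  have hqpos : (0 : ℝ) < ‖q‖ := norm_pos_iff.2 hq0
  have hlog : (a : ℝ) * Real.log ‖q‖ = (c : ℝ) * Real.log ‖q‖ := by
    rw [← Real.log_zpow, ← Real.log_zpow, habs]
  have hlogne : Real.log ‖q‖ ≠ 0 := by
    intro h0
    rcases Real.log_eq_zero.mp h0 with h' | h' | h'
    · exact hqpos.ne' h'
    · exact hq1 h'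
    · linarith
  have : (a : ℝ) = c := mul_right_cancel₀ hlogne hlog
  exact_mod_cast this

/-- Let `q ∈ ℂ` with `|q| ∉ {0,1}`. If `b ∈ ℂ(s)` has a pole of order `m ≥ 1` at `β ∈ ℂ*`
and no pole of order `≥ m` at any point `q^ℓ β` with `ℓ ∈ ℤ \ {0}`, then there is no
`f ∈ ℂ(s)` with `b(s) = f(qs) − f(s)`.  (The order of the pole of `b` at a point is the
root multiplicity of that point in the denominator of `b`.) -/
theorem stmt2 (q : ℂ) (hq0 : q ≠ 0) (hq1 : ‖q‖ ≠ 1)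
    (b : RatFunc ℂ) (β : ℂ) (hβ : β ≠ 0) (m : ℕ) (hm : 1 ≤ m)
    (hpole : b.denom.rootMultiplicity β = m)
    (hothers : ∀ ℓ : ℤ, ℓ ≠ 0 → b.denom.rootMultiplicity (q ^ ℓ * β) < m) :
    ¬ ∃ f : RatFunc ℂ, b = qDil q f - f := by
  rintro ⟨f, hbf⟩
  -- b ≠ 0
  have hb : b ≠ 0 := by
    intro h0
    rw [h0, RatFunc.denom_zero,
      Polynomial.rootMultiplicity_eq_zero (by simp [Polynomial.IsRoot] : ¬(1 : ℂ[X]).IsRoot β)]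
      at hpole
    omega
  have hf0 : f ≠ 0 := by
    rintro rfl
    apply hb
    rw [hbf, sub_eq_zero]
    unfold qDil RatFunc.eval
    simp
  have hqd : qDil q f ≠ 0 := qDil_ne_zero hq0 hf0
  -- pointwise order of b along the orbit
  set g : ℤ → ℤ := fun ℓ => ordAt (q ^ ℓ * β) f with hg
  have horb : ∀ ℓ : ℤ, q * (q ^ ℓ * β) = q ^ (ℓ + 1) * β := by
    intro ℓ
    rw [zpow_add_one₀ hq0]
    ring
  have hb_as : b = qDil q f + (-f) := by rw [hbf]; ring
  have hstep : ∀ ℓ : ℤ, min (g (ℓ + 1)) (g ℓ) ≤ ordAt (q ^ ℓ * β) b := by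
    intro ℓ
    have := min_le_ordAt_add (q ^ ℓ * β) hqd (neg_ne_zero.2 hf0) (by rw [← hb_as]; exact hb)
    rw [← hb_as, ordAt_neg, ordAt_qDil hq0 _ hf0, horb ℓ] at this
    exact this
  have hstep2 : ∀ ℓ : ℤ, g (ℓ + 1) ≠ g ℓ → ordAt (q ^ ℓ * β) b = min (g (ℓ + 1)) (g ℓ) := by
    intro ℓ hne
    have hq' : ordAt (q ^ ℓ * β) (qDil q f) = g (ℓ + 1) := by
      rw [ordAt_qDil hq0 _ hf0, horb ℓ]
    have hf' : ordAt (q ^ ℓ * β) (-f) = g ℓ := ordAt_neg _ _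
    rcases lt_or_gt_of_ne hne with hlt | hlt
    · have h3 := ordAt_add_of_lt (q ^ ℓ * β) hqd (neg_ne_zero.2 hf0)
        (by rw [hq', hf']; exact hlt)
      rw [← hb_as, hq'] at h3
      rw [h3, min_eq_left hlt.le]
    · have hcomm : b = (-f) + qDil q f := by rw [hbf]; ring
      have h3 := ordAt_add_of_lt (q ^ ℓ * β) (neg_ne_zero.2 hf0) hqd
        (by rw [hq', hf']; exact hlt)
      rw [← hcomm, hf'] at h3
      rw [h3, min_eq_right hlt.le]
  -- translate the hypotheses on b
  have hβb : ordAt β b = -(m : ℤ) := by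
    have hnum : b.num.rootMultiplicity β = 0 :=
      num_rootMult_eq_zero (by rw [hpole]; omega)
    unfold ordAt
    rw [hnum, hpole]
    simp
  have hoth' : ∀ ℓ : ℤ, ℓ ≠ 0 → -(m : ℤ) < ordAt (q ^ ℓ * β) b := by
    intro ℓ hℓ
    have := hothers ℓ hℓ
    unfold ordAt
    omega
  -- the set of orbit indices where f has a pole of order ≥ m
  set S : Set ℤ := {ℓ : ℤ | g ℓ ≤ -(m : ℤ)} with hS
  have hSsub : S ⊆ (fun ℓ : ℤ => q ^ ℓ * β) ⁻¹' {x | f.denom.IsRoot x} := by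
    intro ℓ hℓ
    simp only [Set.mem_preimage, Set.mem_setOf_eq]
    have hgl : g ℓ ≤ -(m : ℤ) := hℓ
    have hpos : 0 < f.denom.rootMultiplicity (q ^ ℓ * β) := by
      have h2 : ordAt (q ^ ℓ * β) f ≤ -(m : ℤ) := hgl
      unfold ordAt at h2
      omega
    exact (Polynomial.rootMultiplicity_pos f.denom_ne_zero).1 hpos
  have hfin : S.Finite := by
    apply Set.Finite.subset _ hSsub
    exact Set.Finite.preimage ((zpow_mul_injective hq0 hq1 hβ).injOn)
      (Polynomial.finite_setOf_isRoot f.denom_ne_zero)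
  have hne : S.Nonempty := by
    have h0 := hstep 0
    rw [show q ^ (0 : ℤ) * β = β by simp, hβb, show (0 : ℤ) + 1 = 1 by norm_num] at h0
    rcases min_le_iff.mp h0 with h | h
    · exact ⟨1, by simp only [hS, Set.mem_setOf_eq]; omega⟩
    · exact ⟨0, by simp only [hS, Set.mem_setOf_eq]; omega⟩
  -- pass to a Finset
  set T : Finset ℤ := hfin.toFinset with hT
  have hTne : T.Nonempty := by
    rw [hT, Set.Finite.toFinset_nonempty]
    exact hne
  have hmemT : ∀ ℓ : ℤ, ℓ ∈ T ↔ g ℓ ≤ -(m : ℤ) := by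
    intro ℓ
    rw [hT, Set.Finite.mem_toFinset]
    rfl
  -- the maximal index in S must be 0
  set ℓmax : ℤ := T.max' hTne with hℓmax
  have hmaxmem : g ℓmax ≤ -(m : ℤ) := (hmemT _).1 (T.max'_mem hTne)
  have hmaxsucc : -(m : ℤ) < g (ℓmax + 1) := by
    by_contra hcon
    have : ℓmax + 1 ∈ T := (hmemT _).2 (by omega)
    have := T.le_max' _ this
    omega
  have hbmax : ordAt (q ^ ℓmax * β) b = g ℓmax := by
    have h3 := hstep2 ℓmax (by omega)
    rwa [min_eq_right (by omega)] at h3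
  have hℓmax0 : ℓmax = 0 := by
    by_contra hcon
    have := hoth' ℓmax hcon
    omega
  -- the minimal index leads to a contradiction
  set ℓmin : ℤ := T.min' hTne with hℓmin
  have hminmem : g ℓmin ≤ -(m : ℤ) := (hmemT _).1 (T.min'_mem hTne)
  have hminle : ℓmin ≤ 0 := by
    rw [← hℓmax0]
    exact T.min'_le _ (T.max'_mem hTne)
  have hminpred : -(m : ℤ) < g (ℓmin - 1) := by
    by_contra hcon
    have : ℓmin - 1 ∈ T := (hmemT _).2 (by omega)
    have := T.min'_le _ this
    omega
  have hbmin : ordAt (q ^ (ℓmin - 1) * β) b = g ℓmin := by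
    have h3 := hstep2 (ℓmin - 1) (by rw [sub_add_cancel]; omega)
    rw [sub_add_cancel] at h3
    rwa [min_eq_left (by omega)] at h3
  have := hoth' (ℓmin - 1) (by omega)
  omega
end

section
/- Let q ∈ ℂ* not a root of unity, β ∈ ℂ*, j ≥ 1, and let b(s) = Σ_{ℓ=0}^{d} α_ℓ / (s − q^ℓ β)^j be a rational function with poles only on the q-orbit of β, all of order j. If b is q-summable in ℂ(s) (i.e. b(s) = f(qs) − f(s) for some f ∈ ℂ(s)), then the q-residue Σ_{ℓ=0}^{d} q^{−ℓ j} α_ℓ equals 0. -/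
/-!
Weight the coefficient of `(s - q^k β)^{-j}` in the Laurent expansion at `q^k β` by `q^{-kj}` and
sum over `k ∈ ℤ`. Only finitely many terms are nonzero, since the orbit points are pairwise distinct
(`q` is not a root of unity) and only finitely many of them are poles. This is an additive
functional on `ℂ(s)`, and on `b` it is the `q`-residue. The expansion of `f (q s)` at `c` is the
expansion of `f` at `q c` with the coefficient of `(s - c)^n` scaled by `q^n`, so the functional
takes the same value on `f (q s)` as on `f` (shift `k ↦ k + 1`) and therefore vanishes on every
`q`-summable function.
-/

open Polynomial

open scoped nonZeroDivisors LaurentSeries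

theorem zpow_injective_of_pow_ne_one {G₀ : Type*} [GroupWithZero G₀] {q : G₀} (hq0 : q ≠ 0)
    (hq : ∀ n : ℕ, 0 < n → q ^ n ≠ 1) : Function.Injective fun k : ℤ => q ^ k := by
  have hinf : ¬IsOfFinOrder (Units.mk0 q hq0) := by
    rw [← Units.isOfFinOrder_val, isOfFinOrder_iff_pow_eq_one]
    exact fun ⟨n, hn, h⟩ => hq n hn h
  intro m n h
  exact injective_zpow_iff_not_isOfFinOrder.2 hinf (Units.ext (by simpa using h))

noncomputable section

variable {K : Type*} [Field K]

namespace LaurentSeries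

def rescaleFun (q : K) (g : K⸨X⸩) : K⸨X⸩ where
  coeff n := q ^ n * g.coeff n
  isPWO_support' := g.isPWO_support.mono (Function.support_mul_subset_right _ _)

@[simp]
theorem coeff_rescaleFun (q : K) (g : K⸨X⸩) (n : ℤ) :
    (rescaleFun q g).coeff n = q ^ n * g.coeff n :=
  rfl

theorem support_rescaleFun {q : K} (hq : q ≠ 0) (g : K⸨X⸩) :
    (rescaleFun q g).support = g.support := by
  ext n
  simp [zpow_ne_zero n hq]

def rescale {q : K} (hq : q ≠ 0) : K⸨X⸩ →+* K⸨X⸩ where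
  toFun := rescaleFun q
  map_one' := by
    ext n
    rw [coeff_rescaleFun, HahnSeries.coeff_one]
    split_ifs with h <;> simp [h]
  map_mul' x y := by
    ext n
    have hsupp : Finset.antidiagonal (rescaleFun q x).isPWO_support
        (rescaleFun q y).isPWO_support n
        = Finset.antidiagonal x.isPWO_support y.isPWO_support n := by
      ext ij
      simp only [Finset.mem_antidiagonal, support_rescaleFun hq]
    rw [coeff_rescaleFun, HahnSeries.coeff_mul, HahnSeries.coeff_mul, hsupp, Finset.mul_sum]
    refine Finset.sum_congr rfl fun ij hij => ?_
    rw [coeff_rescaleFun, coeff_rescaleFun, ← (Finset.mem_antidiagonal.1 hij).2.2, zpow_add₀ hq]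
    ring
  map_zero' := by ext n; simp
  map_add' x y := by ext n; simp [mul_add]

@[simp]
theorem coeff_rescale {q : K} (hq : q ≠ 0) (g : K⸨X⸩) (n : ℤ) :
    (rescale hq g).coeff n = q ^ n * g.coeff n :=
  rfl

theorem rescale_single {q : K} (hq : q ≠ 0) (n : ℤ) (a : K) :
    rescale hq (HahnSeries.single n a) = HahnSeries.single n (q ^ n * a) := by
  ext m
  rw [coeff_rescale, HahnSeries.coeff_single, HahnSeries.coeff_single]
  split_ifs with h <;> simp [h]

end LaurentSeries

namespace Polynomial

theorem comp_C_mul_X_ne_zero {q : K} (hq : q ≠ 0) {p : K[X]} (hp : p ≠ 0) :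
    p.comp (C q * X) ≠ 0 := by
  rw [Ne, comp_eq_zero_iff, not_or]
  refine ⟨hp, fun ⟨_, h⟩ => hq ?_⟩
  simpa using congrArg (coeff · 1) h

theorem nonZeroDivisors_le_comap_compRingHom {q : K} (hq : q ≠ 0) :
    K[X]⁰ ≤ K[X]⁰.comap (compRingHom (C q * X)) := by
  intro p hp
  rw [Submonoid.mem_comap, mem_nonZeroDivisors_iff_ne_zero]
  exact comp_C_mul_X_ne_zero hq (nonZeroDivisors.ne_zero hp)

end Polynomial

namespace RatFunc

theorem ringHom_ext' {S : Type*} [Semiring S] {φ ψ : RatFunc K →+* S}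
    (hC : ∀ a, φ (C a) = ψ (C a)) (hX : φ X = ψ X) : φ = ψ :=
  IsLocalization.ringHom_ext K[X]⁰ <| Polynomial.ringHom_ext
    (fun a => by simpa [algebraMap_C] using hC a) (by simpa [algebraMap_X] using hX)

def dilate {q : K} (hq : q ≠ 0) : RatFunc K →+* RatFunc K :=
  mapRingHom (compRingHom (Polynomial.C q * Polynomial.X))
    (nonZeroDivisors_le_comap_compRingHom hq)

theorem dilate_algebraMap {q : K} (hq : q ≠ 0) (p : K[X]) :
    dilate hq (algebraMap _ _ p) = algebraMap _ _ (p.comp (Polynomial.C q * Polynomial.X)) := by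
  simpa [dilate, coe_mapRingHom_eq_coe_map] using
    map_apply_div _ (nonZeroDivisors_le_comap_compRingHom hq) p 1

@[simp]
theorem dilate_C {q : K} (hq : q ≠ 0) (a : K) : dilate hq (C a) = C a := by
  rw [← algebraMap_C, dilate_algebraMap, C_comp]

@[simp]
theorem dilate_X {q : K} (hq : q ≠ 0) : dilate hq X = C q * X := by
  rw [← algebraMap_X, dilate_algebraMap, X_comp, map_mul, algebraMap_C, algebraMap_X]

theorem coe_C (a : K) : ((C a : RatFunc K) : K⸨X⸩) = HahnSeries.C a := by
  rw [← algebraMap_C]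
  exact (coe_coe (Polynomial.C a)).symm.trans (by rw [Polynomial.coe_C, PowerSeries.coe_C])

theorem coe_dilate {q : K} (hq : q ≠ 0) (f : RatFunc K) :
    ((dilate hq f : RatFunc K) : K⸨X⸩) = LaurentSeries.rescale hq f := by
  refine RingHom.congr_fun (ringHom_ext' (φ := (algebraMap _ K⸨X⸩).comp (dilate hq))
    (ψ := (LaurentSeries.rescale hq).comp (algebraMap _ _)) (fun a => ?_) ?_) f
  · simp [coe_C, LaurentSeries.rescale_single]
  · simp [coe_C, LaurentSeries.rescale_single, HahnSeries.C_apply, HahnSeries.single_mul_single]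

theorem laurent_dilate {q : K} (hq : q ≠ 0) (c : K) (f : RatFunc K) :
    laurent c (dilate hq f) = dilate hq (laurent (q * c) f) := by
  refine RingHom.congr_fun
    (ringHom_ext' (φ := (laurent c : RatFunc K →+* RatFunc K).comp (dilate hq))
      (ψ := (dilate hq).comp (laurent (q * c))) (fun a => ?_) ?_) f
  · simp
  · simp [mul_add]

/-- `laurent c f` is `f (X + c)`, so this is the coefficient of `(X - c) ^ n` in the expansion of
`f` at `c`. -/
def laurentCoeff (c : K) (n : ℤ) : RatFunc K →+ K :=
  AddMonoidHom.mk' (fun f => ((laurent c f : RatFunc K) : K⸨X⸩).coeff n) fun f g => by simp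

theorem laurentCoeff_apply (c : K) (n : ℤ) (f : RatFunc K) :
    laurentCoeff c n f = ((laurent c f : RatFunc K) : K⸨X⸩).coeff n :=
  rfl

theorem laurentCoeff_dilate {q : K} (hq : q ≠ 0) (c : K) (n : ℤ) (f : RatFunc K) :
    laurentCoeff c n (dilate hq f) = q ^ n * laurentCoeff (q * c) n f := by
  rw [laurentCoeff_apply, laurentCoeff_apply, laurent_dilate, coe_dilate,
    LaurentSeries.coeff_rescale]

theorem eval_denom_ne_zero_of_eq_div {f : RatFunc K} {p r : K[X]} {c : K}
    (hf : f = algebraMap _ _ p / algebraMap _ _ r) (hr : r.eval c ≠ 0) : f.denom.eval c ≠ 0 := by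
  obtain ⟨s, hs⟩ := hf ▸ denom_div_dvd p r
  rw [hs, Polynomial.eval_mul] at hr
  exact left_ne_zero_of_mul hr

theorem coeff_coe_eq_zero_of_eval_denom_ne_zero {f : RatFunc K} (hf : f.denom.eval 0 ≠ 0)
    {n : ℤ} (hn : n < 0) : (f : K⸨X⸩).coeff n = 0 := by
  obtain ⟨u, hu⟩ : IsUnit (f.denom : PowerSeries K) := by
    rwa [PowerSeries.isUnit_iff_constantCoeff, ← PowerSeries.coeff_zero_eq_constantCoeff_apply,
      Polynomial.coeff_coe, coeff_zero_eq_eval_zero, isUnit_iff_ne_zero]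
  have hf_eq : (f : K⸨X⸩) = HahnSeries.ofPowerSeries ℤ K (f.num * ↑u⁻¹) := by
    conv_lhs => rw [← num_div_denom f]
    rw [algebraMap_apply_div, div_eq_mul_inv, map_mul, map_units_inv, hu]
    rfl
  rw [hf_eq, PowerSeries.coeff_coe, if_pos hn]

theorem laurentCoeff_eq_zero_of_eval_denom_ne_zero {c : K} {n : ℤ} (hn : n < 0) {f : RatFunc K}
    (hc : f.denom.eval c ≠ 0) : laurentCoeff c n f = 0 :=
  coeff_coe_eq_zero_of_eval_denom_ne_zero
    (eval_denom_ne_zero_of_eq_div (by rw [← laurent_div, num_div_denom])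
      (by simpa [taylor_eval] using hc)) hn

theorem laurentCoeff_C_mul_inv_X_sub_C_pow (c a : K) (j : ℕ) :
    laurentCoeff c (-j) (C a * ((X - C c) ^ j)⁻¹) = a := by
  rw [laurentCoeff_apply, map_mul, laurent_C, map_inv₀, map_pow, map_sub, laurent_X, laurent_C,
    add_sub_cancel_right, map_mul, map_inv₀, map_pow, coe_C, coe_X, HahnSeries.single_pow,
    HahnSeries.inv_single, HahnSeries.C_apply, HahnSeries.single_mul_single]
  simp

theorem laurentCoeff_C_mul_inv_X_sub_C_pow_of_ne {c c' : K} (hc : c' ≠ c) (a : K) {j : ℕ}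
    (hj : 0 < j) : laurentCoeff c (-j) (C a * ((X - C c') ^ j)⁻¹) = 0 := by
  refine laurentCoeff_eq_zero_of_eval_denom_ne_zero (by omega)
    (eval_denom_ne_zero_of_eq_div (p := Polynomial.C a) (r := (Polynomial.X - Polynomial.C c') ^ j)
      ?_ ?_)
  · simp [div_eq_mul_inv, algebraMap_C, algebraMap_X]
  · simp [sub_eq_zero, hc.symm]

theorem algebraMap_comp_C_mul_X {q : K} (p : K[X]) :
    algebraMap K[X] (RatFunc K) (p.comp (Polynomial.C q * Polynomial.X)) =
      p.eval₂ C (C q * X) := by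
  rw [Polynomial.comp, hom_eval₂, algebraMap_comp_C, map_mul, algebraMap_C, algebraMap_X]

theorem eval_C_mul_X_eq_dilate {q : K} (hq : q ≠ 0) (f : RatFunc K) :
    f.eval C (C q * X) = dilate hq f := by
  rw [eval, dilate, coe_mapRingHom_eq_coe_map, map_apply, coe_compRingHom_apply,
    coe_compRingHom_apply, algebraMap_comp_C_mul_X, algebraMap_comp_C_mul_X]

section OrbitResidue

variable {q β : K} {j : ℕ}

theorem hasFiniteSupport_laurentCoeff_orbit (hinj : Function.Injective fun k : ℤ => q ^ k * β)
    (hj : 0 < j) (f : RatFunc K) :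
    Function.HasFiniteSupport fun k : ℤ => ((q ^ k) ^ j)⁻¹ * laurentCoeff (q ^ k * β) (-j) f := by
  refine ((finite_setOfPred_isRoot f.denom_ne_zero).preimage hinj.injOn).subset fun k hk => ?_
  by_contra hroot
  rw [Function.mem_support, laurentCoeff_eq_zero_of_eval_denom_ne_zero (by omega) hroot,
    mul_zero] at hk
  exact hk rfl

/-- The `q`-residue of multiplicity `j` at the `q`-orbit of `β`, read off the Laurent expansions at
the orbit points rather than from a partial fraction decomposition. -/
def orbitResidue (hinj : Function.Injective fun k : ℤ => q ^ k * β) (hj : 0 < j) :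
    RatFunc K →+ K where
  toFun f := ∑ᶠ k : ℤ, ((q ^ k) ^ j)⁻¹ * laurentCoeff (q ^ k * β) (-j) f
  map_zero' := by simp
  map_add' f g := by
    simp only [map_add, mul_add]
    exact finsum_add_distrib (hasFiniteSupport_laurentCoeff_orbit hinj hj f)
      (hasFiniteSupport_laurentCoeff_orbit hinj hj g)

theorem orbitResidue_apply (hinj : Function.Injective fun k : ℤ => q ^ k * β) (hj : 0 < j)
    (f : RatFunc K) :
    orbitResidue hinj hj f = ∑ᶠ k : ℤ, ((q ^ k) ^ j)⁻¹ * laurentCoeff (q ^ k * β) (-j) f :=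
  rfl

theorem orbitResidue_dilate (hq : q ≠ 0) (hinj : Function.Injective fun k : ℤ => q ^ k * β)
    (hj : 0 < j) (f : RatFunc K) : orbitResidue hinj hj (dilate hq f) = orbitResidue hinj hj f := by
  rw [orbitResidue_apply, orbitResidue_apply, ← finsum_comp_equiv (Equiv.addRight (1 : ℤ))
    (f := fun k => ((q ^ k) ^ j)⁻¹ * laurentCoeff (q ^ k * β) (-j) f)]
  refine finsum_congr fun k => ?_
  rw [laurentCoeff_dilate, Equiv.coe_addRight, zpow_add_one₀ hq, zpow_neg, zpow_natCast,
    mul_pow, mul_inv, ← mul_assoc q, mul_comm q]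
  ring

theorem orbitResidue_C_mul_inv_X_sub_C_pow (hinj : Function.Injective fun k : ℤ => q ^ k * β)
    (hj : 0 < j) (m : ℤ) (a : K) :
    orbitResidue hinj hj (C a * ((X - C (q ^ m * β)) ^ j)⁻¹) = ((q ^ m) ^ j)⁻¹ * a := by
  rw [orbitResidue_apply, finsum_eq_single _ m, laurentCoeff_C_mul_inv_X_sub_C_pow]
  intro k hk
  rw [laurentCoeff_C_mul_inv_X_sub_C_pow_of_ne (hinj.ne hk.symm) a hj, mul_zero]

end OrbitResidue

end RatFunc

end

/-- Let `q ∈ ℂ*` not a root of unity, `β ∈ ℂ*`, `j ≥ 1`, and let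
`b(s) = Σ_{ℓ=0}^{d} α_ℓ / (s − q^ℓ β)^j`. If `b` is `q`-summable in `ℂ(s)`, then its
`q`-residue `Σ_{ℓ=0}^{d} q^{−ℓ j} α_ℓ` equals `0`. -/
theorem stmt3 (q β : ℂ) (hq0 : q ≠ 0) (hq : ∀ n : ℕ, 0 < n → q ^ n ≠ 1) (hβ : β ≠ 0)
    (j : ℕ) (hj : 1 ≤ j) (d : ℕ) (α : ℕ → ℂ) (b : RatFunc ℂ)
    (hb : b = ∑ ℓ ∈ Finset.range (d + 1),
      RatFunc.C (α ℓ) * ((RatFunc.X - RatFunc.C (q ^ ℓ * β)) ^ j)⁻¹)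
    (hsum : ∃ f : RatFunc ℂ, b = qDil q f - f) :
    ∑ ℓ ∈ Finset.range (d + 1), (q ^ (ℓ * j))⁻¹ * α ℓ = 0 := by
  obtain ⟨f, hf⟩ := hsum
  have hinj : Function.Injective fun k : ℤ => q ^ k * β :=
    (mul_left_injective₀ hβ).comp (zpow_injective_of_pow_ne_one hq0 hq)
  let res := RatFunc.orbitResidue hinj hj
  calc ∑ ℓ ∈ Finset.range (d + 1), (q ^ (ℓ * j))⁻¹ * α ℓ = res b := by
        rw [hb, map_sum]
        refine Finset.sum_congr rfl fun ℓ _ => ?_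
        rw [← zpow_natCast q ℓ, RatFunc.orbitResidue_C_mul_inv_X_sub_C_pow, zpow_natCast, pow_mul]
    _ = res (RatFunc.dilate hq0 f) - res f := by
        rw [hf, qDil, RatFunc.eval_C_mul_X_eq_dilate hq0, map_sub]
    _ = 0 := by rw [RatFunc.orbitResidue_dilate, sub_self]
end

section
/- Let d_{−1,1}, d_{1,−1} > 0 and t transcendental in (0,1), with all other d_{i,j} ∈ [0,1] algebraic. Consider Δ(y) := β₄ y² + β₃ y + β₂ where β₂ = (1 − t d_{0,0})² − 4t² d_{1,−1} d_{−1,1}, β₃ = 2t² d_{0,1} d_{0,0} − 2t d_{0,1} − 4t² d_{1,0} d_{−1,1}, β₄ = t²(d_{0,1}² − 4 d_{1,1} d_{−1,1}). If the discriminant β₃² − 4β₂β₄ = 0, then d_{1,1} = 0 and d_{0,1} = d_{1,0} = 0. -/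
set_option maxHeartbeats 1000000 in
set_option synthInstance.maxHeartbeats 400000 in
open Polynomial in
/-- If `t` is transcendental over `ℚ` and satisfies a quadratic relation with algebraic
real coefficients, then all three coefficients vanish. -/
lemma quad_coeffs_zero' {a b c t : ℝ} (ha : IsAlgebraic ℚ a) (hb : IsAlgebraic ℚ b)
    (hc : IsAlgebraic ℚ c) (htr : Transcendental ℚ t)
    (h : a + b * t + c * t ^ 2 = 0) : a = 0 ∧ b = 0 ∧ c = 0 := by
  by_contra hne
  have ha' : a ∈ integralClosure ℚ ℝ := ha.isIntegral
  have hb' : b ∈ integralClosure ℚ ℝ := hb.isIntegral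
  have hc' : c ∈ integralClosure ℚ ℝ := hc.isIntegral
  let q : (integralClosure ℚ ℝ)[X] := C ⟨a, ha'⟩ + C ⟨b, hb'⟩ * X + C ⟨c, hc'⟩ * X ^ 2
  have hq0 : q ≠ 0 := by
    intro hq
    apply hne
    have h0 : q.coeff 0 = 0 := by rw [hq]; simp
    have h1 : q.coeff 1 = 0 := by rw [hq]; simp
    have h2 : q.coeff 2 = 0 := by rw [hq]; simp
    simp [q, coeff_add, coeff_C, coeff_X, coeff_X_pow, Subtype.ext_iff] at h0 h1 h2
    exact ⟨h0, h1, h2⟩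
  have haev : aeval t q = 0 := by
    simp only [q, map_add, map_mul, map_pow, aeval_C, aeval_X]
    show a + b * t + c * t ^ 2 = 0
    exact h
  have hint : IsIntegral (integralClosure ℚ ℝ) t := by
    have hf : IsField (integralClosure ℚ ℝ) :=
      { show Nontrivial (integralClosure ℚ ℝ) by infer_instance,
        Subalgebra.toCommRing (integralClosure ℚ ℝ) with
        mul_inv_cancel := fun {x} hx =>
          ⟨⟨(x : ℝ)⁻¹, (integralClosure ℚ ℝ).inv_mem_of_algebraic (IsIntegral.isAlgebraic x.2)⟩,
            Subtype.ext (mul_inv_cancel₀ (mt (Subalgebra.coe_eq_zero _).mp hx))⟩ }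
    letI : Field (integralClosure ℚ ℝ) := hf.toField
    exact isAlgebraic_iff_isIntegral.mp ⟨q, hq0, haev⟩
  exact htr (isIntegral_trans t hint).isAlgebraic

/-- Products and sums of algebraic real numbers are algebraic (via integrality over `ℚ`). -/
lemma isAlgebraic_mul' {x y : ℝ} (hx : IsAlgebraic ℚ x) (hy : IsAlgebraic ℚ y) :
    IsAlgebraic ℚ (x * y) :=
  (hx.isIntegral.mul hy.isIntegral).isAlgebraic

lemma isAlgebraic_add' {x y : ℝ} (hx : IsAlgebraic ℚ x) (hy : IsAlgebraic ℚ y) :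
    IsAlgebraic ℚ (x + y) :=
  (hx.isIntegral.add hy.isIntegral).isAlgebraic

lemma isAlgebraic_sub' {x y : ℝ} (hx : IsAlgebraic ℚ x) (hy : IsAlgebraic ℚ y) :
    IsAlgebraic ℚ (x - y) :=
  (hx.isIntegral.sub hy.isIntegral).isAlgebraic

lemma isAlgebraic_pow' {x : ℝ} (hx : IsAlgebraic ℚ x) (n : ℕ) :
    IsAlgebraic ℚ (x ^ n) :=
  (hx.isIntegral.pow n).isAlgebraic

lemma isAlgebraic_ofNat' (n : ℕ) : IsAlgebraic ℚ (n : ℝ) := by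
  simpa using isAlgebraic_algebraMap (R := ℚ) (A := ℝ) (n : ℚ)

set_option maxHeartbeats 1000000 in
/-- Let `d_{−1,1}, d_{1,−1} > 0`, the other weights algebraic reals in `[0,1]`, and
`t ∈ (0,1)` transcendental.  With
`β₂ = (1 − t d_{0,0})² − 4t² d_{1,−1} d_{−1,1}`,
`β₃ = 2t² d_{0,1} d_{0,0} − 2t d_{0,1} − 4t² d_{1,0} d_{−1,1}`,
`β₄ = t²(d_{0,1}² − 4 d_{1,1} d_{−1,1})`,
if `β₃² − 4β₂β₄ = 0` then `d_{1,1} = 0`, `d_{0,1} = 0` and `d_{1,0} = 0`. -/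
theorem stmt13 (dm11 d1m1 d00 d01 d10 d11 t : ℝ)
    (ham11 : IsAlgebraic ℚ dm11) (ha1m1 : IsAlgebraic ℚ d1m1)
    (ha00 : IsAlgebraic ℚ d00) (ha01 : IsAlgebraic ℚ d01)
    (ha10 : IsAlgebraic ℚ d10) (ha11 : IsAlgebraic ℚ d11)
    (hm11 : 0 < dm11) (h1m1 : 0 < d1m1)
    (h00 : d00 ∈ Set.Icc (0 : ℝ) 1) (h01 : d01 ∈ Set.Icc (0 : ℝ) 1)
    (h10 : d10 ∈ Set.Icc (0 : ℝ) 1) (h11 : d11 ∈ Set.Icc (0 : ℝ) 1)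
    (hm11' : dm11 ≤ 1) (h1m1' : d1m1 ≤ 1)
    (htr : Transcendental ℚ t) (ht0 : 0 < t) (ht1 : t < 1)
    (hdisc : (2 * t ^ 2 * d01 * d00 - 2 * t * d01 - 4 * t ^ 2 * d10 * dm11) ^ 2
      - 4 * ((1 - t * d00) ^ 2 - 4 * t ^ 2 * d1m1 * dm11)
        * (t ^ 2 * (d01 ^ 2 - 4 * d11 * dm11)) = 0) :
    d11 = 0 ∧ d01 = 0 ∧ d10 = 0 := by
  have ht : t ≠ 0 := ne_of_gt ht0
  have h16 : IsAlgebraic ℚ (16 : ℝ) := by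
    have := isAlgebraic_ofNat' 16; norm_num at this ⊢; exact this
  -- the three relevant coefficients of the discriminant as a polynomial in `t`
  set c2 : ℝ := 16 * dm11 * d11 with hc2
  set c3 : ℝ := 16 * dm11 * (d01 * d10 - 2 * d00 * d11) with hc3
  set c4 : ℝ := 16 * dm11 * (dm11 * d10 ^ 2 + d00 ^ 2 * d11 + d1m1 * d01 ^ 2
      - d00 * d01 * d10 - 4 * d1m1 * dm11 * d11) with hc4
  have key : c2 + c3 * t + c4 * t ^ 2 = 0 := by
    have h2 : t ^ 2 * (c2 + c3 * t + c4 * t ^ 2) = 0 := by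
      rw [hc2, hc3, hc4]; linear_combination hdisc
    rcases mul_eq_zero.mp h2 with h | h
    · exact absurd h (pow_ne_zero 2 ht)
    · exact h
  have hac2 : IsAlgebraic ℚ c2 := isAlgebraic_mul' (isAlgebraic_mul' h16 ham11) ha11
  have hac3 : IsAlgebraic ℚ c3 := isAlgebraic_mul' (isAlgebraic_mul' h16 ham11)
    (isAlgebraic_sub' (isAlgebraic_mul' ha01 ha10)
      (isAlgebraic_mul' (isAlgebraic_mul' (by
        have := isAlgebraic_ofNat' 2; norm_num at this ⊢; exact this) ha00) ha11))
  have hac4 : IsAlgebraic ℚ c4 := by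
    refine isAlgebraic_mul' (isAlgebraic_mul' h16 ham11) ?_
    have h4 : IsAlgebraic ℚ (4 : ℝ) := by
      have := isAlgebraic_ofNat' 4; norm_num at this ⊢; exact this
    exact isAlgebraic_sub' (isAlgebraic_sub'
      (isAlgebraic_add' (isAlgebraic_add'
        (isAlgebraic_mul' ham11 (isAlgebraic_pow' ha10 2))
        (isAlgebraic_mul' (isAlgebraic_pow' ha00 2) ha11))
        (isAlgebraic_mul' ha1m1 (isAlgebraic_pow' ha01 2)))
      (isAlgebraic_mul' (isAlgebraic_mul' ha00 ha01) ha10))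
      (isAlgebraic_mul' (isAlgebraic_mul' (isAlgebraic_mul' h4 ha1m1) ham11) ha11)
  obtain ⟨e2, e3, e4⟩ := quad_coeffs_zero' hac2 hac3 hac4 htr key
  have hd11 : d11 = 0 := by
    rw [hc2] at e2
    have h' : dm11 * d11 = 0 := by linear_combination (1 / 16 : ℝ) * e2
    exact (mul_eq_zero.mp h').resolve_left (ne_of_gt hm11)
  have hprod : d01 * d10 = 0 := by
    rw [hc3, hd11] at e3
    have h' : dm11 * (d01 * d10) = 0 := by linear_combination (1 / 16 : ℝ) * e3
    exact (mul_eq_zero.mp h').resolve_left (ne_of_gt hm11)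
  have hsum : dm11 * d10 ^ 2 + d1m1 * d01 ^ 2 = 0 := by
    rw [hc4, hd11] at e4
    have h' : dm11 * (dm11 * d10 ^ 2 + d1m1 * d01 ^ 2) = 0 := by
      linear_combination (1 / 16 : ℝ) * e4 + dm11 * d00 * hprod
    exact (mul_eq_zero.mp h').resolve_left (ne_of_gt hm11)
  have hd10 : d10 = 0 := by
    have h1 : dm11 * d10 ^ 2 = 0 := by
      linarith [mul_nonneg hm11.le (sq_nonneg d10), mul_nonneg h1m1.le (sq_nonneg d01)]
    have h2 : d10 ^ 2 = 0 := (mul_eq_zero.mp h1).resolve_left (ne_of_gt hm11)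
    exact pow_eq_zero_iff two_ne_zero |>.mp h2
  have hd01 : d01 = 0 := by
    have h1 : d1m1 * d01 ^ 2 = 0 := by
      linarith [mul_nonneg hm11.le (sq_nonneg d10), mul_nonneg h1m1.le (sq_nonneg d01)]
    have h2 : d01 ^ 2 = 0 := (mul_eq_zero.mp h1).resolve_left (ne_of_gt h1m1)
    exact pow_eq_zero_iff two_ne_zero |>.mp h2
  exact ⟨hd11, hd01, hd10⟩
end
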